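/- For every n ≥ 2, none of the semigroups M_n(ℕ_max), M_n((-ℕ)_max), UT_n(ℕ_max) and UT_n((-ℕ)_max) is strongly permutable. -/

import Mathlib

set_option maxHeartbeats 1000000

universe u

/-! ### Semiring classes.

A *semiring* here is a nonempty set with an associative commutative addition and an
associative multiplication which distributes over addition on both sides; no zero or
identity element is assumed. -/

class PlainSemiring (S : Type u) extends Add S, Mul S where
  nonempty' : Nonempty S
  add_assoc' : ∀ a b c : S, a + b + c = a + (b + c)
  add_comm' : ∀ a b : S, a + b = b + a
  mul_assoc' : ∀ a b c : S, a * b * c = a * (b * c)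
  left_distrib' : ∀ a b c : S, a * (b + c) = a * b + a * c
  right_distrib' : ∀ a b c : S, (a + b) * c = a * c + b * c

/-- A bipotent semiring: `x + y` is always either `x` or `y`.
(The induced total order is given by `x ≤ y ↔ x + y = y`.) -/
class BipotentSemiring (S : Type u) extends PlainSemiring S where
  bipotent : ∀ a b : S, a + b = a ∨ a + b = b

/-- A commutative bipotent semiring. -/
class CommBipotentSemiring (S : Type u) extends BipotentSemiring S where
  mul_comm' : ∀ a b : S, a * b = b * a

/-- `mpow a n` is the `(n+1)`-st power of `a`, so the set of positive powers of `a`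
is exactly `Set.range (mpow a)`, and the multiplicative order of `a` is the
cardinality of `Set.range (mpow a)`. -/
def mpow {S : Type*} [Mul S] (a : S) : ℕ → S
  | 0 => a
  | n + 1 => mpow a n * a

lemma mpow_mul_mpow {S : Type*} [PlainSemiring S] (a : S) (m n : ℕ) :
    mpow a m * mpow a n = mpow a (m + n + 1) := by
  induction n with
  | zero => rfl
  | succ n ih =>
    show mpow a m * (mpow a n * a) = mpow a (m + n + 1) * a
    rw [← PlainSemiring.mul_assoc', ih]

/-! ### Products of finite families, and permutability. -/

/-- Fold step used to define sums/products of possibly empty families in a structure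
with no neutral element; the overall fold is `none` iff the family is empty. -/
def optStep {S : Type*} (op : S → S → S) : Option S → S → Option S :=
  fun acc x => some (acc.elim x (fun a => op a x))

/-- The sum `s 0 + s 1 + ⋯` of a finite family, as an `Option` (`none` iff `k = 0`). -/
def finSum {S : Type*} [Add S] {k : ℕ} (s : Fin k → S) : Option S :=
  (List.ofFn s).foldl (optStep (· + ·)) none

/-- The product `s 0 * s 1 * ⋯` of a finite family, as an `Option` (`none` iff `k = 0`). -/
def finProd {S : Type*} [Mul S] {k : ℕ} (s : Fin k → S) : Option S :=
  (List.ofFn s).foldl (optStep (· * ·)) none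

/-- A multiplicative structure is `k`-permutable if every product of `k` elements is
preserved by some non-identity permutation of its factors. -/
def KPermutable (S : Type*) [Mul S] (k : ℕ) : Prop :=
  ∀ s : Fin k → S, ∃ σ : Equiv.Perm (Fin k), σ ≠ Equiv.refl (Fin k) ∧
    finProd (fun i => s (σ i)) = finProd s

/-- A semigroup is strongly permutable if it is `k`-permutable for some `k ≥ 2`. -/
def StronglyPermutable (S : Type*) [Mul S] : Prop :=
  ∃ k : ℕ, 2 ≤ k ∧ KPermutable S k

/-- A semigroup is weakly permutable if for some `k ≥ 2`, any product of `k` elements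
is computed identically by two distinct permutations of its factors. -/
def WeaklyPermutable (S : Type*) [Mul S] : Prop :=
  ∃ k : ℕ, 2 ≤ k ∧ ∀ s : Fin k → S, ∃ σ τ : Equiv.Perm (Fin k), σ ≠ τ ∧
    finProd (fun i => s (σ i)) = finProd (fun i => s (τ i))

/-- Isomorphism of semirings (bijection preserving addition and multiplication). -/
def RingLikeIso (S T : Type*) [Add S] [Mul S] [Add T] [Mul T] : Prop :=
  ∃ f : S → T, Function.Bijective f ∧ (∀ a b : S, f (a + b) = f a + f b) ∧
    (∀ a b : S, f (a * b) = f a * f b)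

/-! ### Matrices. -/

/-- Square `n × n` matrices over `S`. -/
def MatSR (S : Type u) (n : ℕ) : Type u := Fin n → Fin n → S

/-- Matrix multiplication, `(A*B) i j = Σ_k (A i k * B k j)`.  (For `n ≥ 1` — the only
case of interest — the `getD` default value is never used.) -/
def matMul {S : Type*} [Add S] [Mul S] {n : ℕ} (A B : MatSR S n) : MatSR S n :=
  fun i j => (finSum (fun k : Fin n => A i k * B k j)).getD (A i j * B i j)

/-- The multiplicative semigroup `M_n(S)`. -/
instance {S : Type*} [Add S] [Mul S] {n : ℕ} : Mul (MatSR S n) := ⟨matMul⟩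

/-! ### `S⁰`: adjoining a zero, and upper triangular matrices. -/

/-- `S` with a zero (additively neutral, multiplicatively absorbing) element adjoined. -/
inductive Adj0 (S : Type u) : Type u
  | zero : Adj0 S
  | elem : S → Adj0 S

namespace Adj0

def add' {S : Type*} [Add S] : Adj0 S → Adj0 S → Adj0 S
  | .zero, b => b
  | .elem a, .zero => .elem a
  | .elem a, .elem b => .elem (a + b)

def mul' {S : Type*} [Mul S] : Adj0 S → Adj0 S → Adj0 S
  | .zero, _ => .zero
  | .elem _, .zero => .zero
  | .elem a, .elem b => .elem (a * b)

instance {S : Type*} [Add S] : Add (Adj0 S) := ⟨add'⟩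
instance {S : Type*} [Mul S] : Mul (Adj0 S) := ⟨mul'⟩

@[simp] lemma zero_add {S : Type*} [Add S] (b : Adj0 S) : (zero : Adj0 S) + b = b := rfl
@[simp] lemma add_zero {S : Type*} [Add S] (a : Adj0 S) : a + (zero : Adj0 S) = a := by
  cases a <;> rfl
@[simp] lemma elem_add_elem {S : Type*} [Add S] (a b : S) :
    (elem a : Adj0 S) + elem b = elem (a + b) := rfl
@[simp] lemma zero_mul {S : Type*} [Mul S] (b : Adj0 S) : (zero : Adj0 S) * b = zero := rfl
@[simp] lemma mul_zero {S : Type*} [Mul S] (a : Adj0 S) : a * (zero : Adj0 S) = zero := by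
  cases a <;> rfl
@[simp] lemma elem_mul_elem {S : Type*} [Mul S] (a b : S) :
    (elem a : Adj0 S) * elem b = elem (a * b) := rfl

lemma add_eq_zero_iff {S : Type*} [Add S] (a b : Adj0 S) :
    a + b = zero ↔ a = zero ∧ b = zero := by
  cases a <;> cases b <;> simp

end Adj0

lemma foldl_optStep_adj0 {S : Type*} [Add S] (l : List (Adj0 S)) (a : Adj0 S) :
    ∃ c : Adj0 S, l.foldl (optStep (· + ·)) (some a) = some c ∧
      (c = Adj0.zero ↔ a = Adj0.zero ∧ ∀ x ∈ l, x = Adj0.zero) := by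
  induction l generalizing a with
  | nil => exact ⟨a, rfl, by simp⟩
  | cons x l ih =>
    obtain ⟨c, hc, hiff⟩ := ih (a + x)
    refine ⟨c, ?_, ?_⟩
    · simpa [optStep] using hc
    · rw [hiff, Adj0.add_eq_zero_iff]
      simp only [List.mem_cons, forall_eq_or_imp]
      tauto

lemma finSum_adj0_eq_zero {S : Type*} [Add S] {n : ℕ} (f : Fin n → Adj0 S) (i : Fin n)
    (d : Adj0 S) (h : ∀ k, f k = Adj0.zero) : (finSum f).getD d = Adj0.zero := by
  cases n with
  | zero => exact i.elim0
  | succ m =>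
    rw [finSum, List.ofFn_succ, List.foldl_cons]
    obtain ⟨c, hc, hiff⟩ := foldl_optStep_adj0 (List.ofFn fun i : Fin m => f i.succ) (f 0)
    rw [show optStep (· + ·) none (f 0) = some (f 0) from rfl, hc]
    have : c = Adj0.zero := hiff.mpr ⟨h 0, by
      intro x hx
      rw [List.mem_ofFn] at hx
      obtain ⟨j, rfl⟩ := hx
      exact h _⟩
    simp [this]

lemma finSum_adj0_ne_zero {S : Type*} [Add S] {n : ℕ} (f : Fin n → Adj0 S) (i : Fin n)
    (d : Adj0 S) (h : f i ≠ Adj0.zero) : (finSum f).getD d ≠ Adj0.zero := by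
  cases n with
  | zero => exact i.elim0
  | succ m =>
    rw [finSum, List.ofFn_succ, List.foldl_cons]
    obtain ⟨c, hc, hiff⟩ := foldl_optStep_adj0 (List.ofFn fun i : Fin m => f i.succ) (f 0)
    rw [show optStep (· + ·) none (f 0) = some (f 0) from rfl, hc]
    simp only [Option.getD_some]
    intro hcz
    obtain ⟨h0, hall⟩ := hiff.mp hcz
    induction i using Fin.cases with
    | zero => exact h h0
    | succ j => exact h (hall _ (List.mem_ofFn.mpr ⟨j, rfl⟩))

/-- Upper-triangularity over `S⁰`: entries strictly below the diagonal are the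
adjoined zero; entries on and above the diagonal lie in `S`. -/
def IsUT {S : Type*} {n : ℕ} (A : MatSR (Adj0 S) n) : Prop :=
  (∀ i j : Fin n, (j : ℕ) < (i : ℕ) → A i j = Adj0.zero) ∧
  (∀ i j : Fin n, (i : ℕ) ≤ (j : ℕ) → ∃ s : S, A i j = Adj0.elem s)

lemma IsUT.mul {S : Type*} [Add S] [Mul S] {n : ℕ} {A B : MatSR (Adj0 S) n}
    (hA : IsUT A) (hB : IsUT B) : IsUT (matMul A B) := by
  constructor
  · intro i j hji
    apply finSum_adj0_eq_zero _ i
    intro k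
    rcases le_or_gt (i : ℕ) (k : ℕ) with h | h
    · rw [hB.1 k j (lt_of_lt_of_le hji h), Adj0.mul_zero]
    · rw [hA.1 i k h, Adj0.zero_mul]
  · intro i j hij
    have hne : matMul A B i j ≠ Adj0.zero := by
      apply finSum_adj0_ne_zero _ i
      obtain ⟨s, hs⟩ := hA.2 i i le_rfl
      obtain ⟨t, ht⟩ := hB.2 i j hij
      rw [hs, ht, Adj0.elem_mul_elem]
      simp
    cases hc : matMul A B i j with
    | zero => exact absurd hc hne
    | elem s => exact ⟨s, rfl⟩

/-- The multiplicative semigroup `UT_n(S)` of upper triangular matrices over `S⁰`. -/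
def UTMat (S : Type u) (n : ℕ) : Type u := {A : MatSR (Adj0 S) n // IsUT A}

instance {S : Type*} [Add S] [Mul S] {n : ℕ} : Mul (UTMat S n) :=
  ⟨fun A B => ⟨matMul A.1 B.1, A.2.mul B.2⟩⟩

/-! ### `S^{01}`: adjoining a zero and an identity, and unitriangular matrices. -/

/-- `S` with a zero and a multiplicative identity adjoined (`S^{01}` in the paper).
The sum of `one` and an `elem` is left undefined in the paper; it is given an
arbitrary value here, and never arises in products of unitriangular matrices. -/
inductive Adj01 (S : Type u) : Type u
  | zero : Adj01 S
  | one : Adj01 S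
  | elem : S → Adj01 S

namespace Adj01

def add' {S : Type*} [Add S] : Adj01 S → Adj01 S → Adj01 S
  | .zero, b => b
  | a, .zero => a
  | .one, .one => .one
  | .one, .elem b => .elem b
  | .elem a, .one => .elem a
  | .elem a, .elem b => .elem (a + b)

def mul' {S : Type*} [Mul S] : Adj01 S → Adj01 S → Adj01 S
  | .zero, _ => .zero
  | _, .zero => .zero
  | .one, b => b
  | a, .one => a
  | .elem a, .elem b => .elem (a * b)

instance {S : Type*} [Add S] : Add (Adj01 S) := ⟨add'⟩
instance {S : Type*} [Mul S] : Mul (Adj01 S) := ⟨mul'⟩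

@[simp] lemma zero_add {S : Type*} [Add S] (b : Adj01 S) : (zero : Adj01 S) + b = b := by
  cases b <;> rfl
@[simp] lemma add_zero {S : Type*} [Add S] (a : Adj01 S) : a + (zero : Adj01 S) = a := by
  cases a <;> rfl
@[simp] lemma one_add_one {S : Type*} [Add S] : (one : Adj01 S) + one = one := rfl
@[simp] lemma elem_add_elem {S : Type*} [Add S] (a b : S) :
    (elem a : Adj01 S) + elem b = elem (a + b) := rfl
@[simp] lemma one_add_elem {S : Type*} [Add S] (b : S) :
    (one : Adj01 S) + elem b = elem b := rfl
@[simp] lemma elem_add_one {S : Type*} [Add S] (a : S) :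
    (elem a : Adj01 S) + one = elem a := rfl
@[simp] lemma zero_mul {S : Type*} [Mul S] (b : Adj01 S) : (zero : Adj01 S) * b = zero := by
  cases b <;> rfl
@[simp] lemma mul_zero {S : Type*} [Mul S] (a : Adj01 S) : a * (zero : Adj01 S) = zero := by
  cases a <;> rfl
@[simp] lemma one_mul {S : Type*} [Mul S] (b : Adj01 S) : (one : Adj01 S) * b = b := by
  cases b <;> rfl
@[simp] lemma mul_one {S : Type*} [Mul S] (a : Adj01 S) : a * (one : Adj01 S) = a := by
  cases a <;> rfl
@[simp] lemma elem_mul_elem {S : Type*} [Mul S] (a b : S) :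
    (elem a : Adj01 S) * elem b = elem (a * b) := rfl

lemma mul_ne_one {S : Type*} [Mul S] {a b : Adj01 S} (ha : a ≠ one) (hb : b ≠ one) :
    a * b ≠ one := by
  cases a <;> cases b <;> simp_all

lemma add_ne_one {S : Type*} [Add S] {a b : Adj01 S} (ha : a ≠ one) (hb : b ≠ one) :
    a + b ≠ one := by
  cases a <;> cases b <;> simp_all

lemma add_01 {S : Type*} [Add S] {a b : Adj01 S} (ha : a = zero ∨ a = one)
    (hb : b = zero ∨ b = one) :
    (a + b = zero ∨ a + b = one) ∧ (a + b = one ↔ a = one ∨ b = one) := by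
  rcases ha with rfl | rfl <;> rcases hb with rfl | rfl <;> simp

end Adj01

lemma foldl_optStep_adj01 {S : Type*} [Add S] (l : List (Adj01 S)) (a : Adj01 S)
    (ha : a = Adj01.zero ∨ a = Adj01.one) (hl : ∀ x ∈ l, x = Adj01.zero ∨ x = Adj01.one) :
    ∃ c : Adj01 S, l.foldl (optStep (· + ·)) (some a) = some c ∧
      (c = Adj01.zero ∨ c = Adj01.one) ∧
      (c = Adj01.one ↔ a = Adj01.one ∨ ∃ x ∈ l, x = Adj01.one) := by
  induction l generalizing a with
  | nil => exact ⟨a, rfl, ha, by simp⟩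
  | cons x l ih =>
    have hx := hl x (by simp)
    have key := Adj01.add_01 ha hx
    obtain ⟨c, hc, hc01, hiff⟩ := ih (a + x) key.1 (fun y hy => hl y (by simp [hy]))
    refine ⟨c, by simpa [optStep] using hc, hc01, ?_⟩
    rw [hiff, key.2]
    simp only [List.mem_cons, exists_eq_or_imp]
    tauto

lemma foldl_optStep_adj01_ne_one {S : Type*} [Add S] (l : List (Adj01 S)) (a : Adj01 S)
    (ha : a ≠ Adj01.one) (hl : ∀ x ∈ l, x ≠ Adj01.one) :
    ∃ c : Adj01 S, l.foldl (optStep (· + ·)) (some a) = some c ∧ c ≠ Adj01.one := by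
  induction l generalizing a with
  | nil => exact ⟨a, rfl, ha⟩
  | cons x l ih =>
    have hax : a + x ≠ Adj01.one := Adj01.add_ne_one ha (hl x (by simp))
    obtain ⟨c, hc, hcne⟩ := ih (a + x) hax (fun y hy => hl y (by simp [hy]))
    exact ⟨c, by simpa [optStep] using hc, hcne⟩

lemma finSum_adj01_eq_one {S : Type*} [Add S] {n : ℕ} (f : Fin n → Adj01 S) (i : Fin n)
    (d : Adj01 S) (h01 : ∀ k, f k = Adj01.zero ∨ f k = Adj01.one) (hi : f i = Adj01.one) :
    (finSum f).getD d = Adj01.one := by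
  cases n with
  | zero => exact i.elim0
  | succ m =>
    rw [finSum, List.ofFn_succ, List.foldl_cons]
    obtain ⟨c, hc, _, hiff⟩ := foldl_optStep_adj01 (List.ofFn fun i : Fin m => f i.succ) (f 0)
      (h01 0) (by
        intro x hx
        rw [List.mem_ofFn] at hx
        obtain ⟨j, rfl⟩ := hx
        exact h01 _)
    rw [show optStep (· + ·) none (f 0) = some (f 0) from rfl, hc]
    simp only [Option.getD_some]
    apply hiff.mpr
    induction i using Fin.cases with
    | zero => exact Or.inl hi
    | succ j => exact Or.inr ⟨f j.succ, List.mem_ofFn.mpr ⟨j, rfl⟩, hi⟩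

lemma finSum_adj01_eq_zero {S : Type*} [Add S] {n : ℕ} (f : Fin n → Adj01 S) (i : Fin n)
    (d : Adj01 S) (h : ∀ k, f k = Adj01.zero) : (finSum f).getD d = Adj01.zero := by
  cases n with
  | zero => exact i.elim0
  | succ m =>
    rw [finSum, List.ofFn_succ, List.foldl_cons]
    obtain ⟨c, hc, hc01, hiff⟩ := foldl_optStep_adj01 (List.ofFn fun i : Fin m => f i.succ)
      (f 0) (Or.inl (h 0)) (by
        intro x hx
        rw [List.mem_ofFn] at hx
        obtain ⟨j, rfl⟩ := hx
        exact Or.inl (h _))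
    rw [show optStep (· + ·) none (f 0) = some (f 0) from rfl, hc]
    simp only [Option.getD_some]
    rcases hc01 with h' | h'
    · exact h'
    · exfalso
      rcases hiff.mp h' with h'' | ⟨x, hx, hx1⟩
      · rw [h 0] at h''; cases h''
      · rw [List.mem_ofFn] at hx
        obtain ⟨j, rfl⟩ := hx
        rw [h _] at hx1; cases hx1

lemma finSum_adj01_ne_one {S : Type*} [Add S] {n : ℕ} (f : Fin n → Adj01 S) (i : Fin n)
    (d : Adj01 S) (h : ∀ k, f k ≠ Adj01.one) : (finSum f).getD d ≠ Adj01.one := by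
  cases n with
  | zero => exact i.elim0
  | succ m =>
    rw [finSum, List.ofFn_succ, List.foldl_cons]
    obtain ⟨c, hc, hcne⟩ := foldl_optStep_adj01_ne_one (List.ofFn fun i : Fin m => f i.succ)
      (f 0) (h 0) (by
        intro x hx
        rw [List.mem_ofFn] at hx
        obtain ⟨j, rfl⟩ := hx
        exact h _)
    rw [show optStep (· + ·) none (f 0) = some (f 0) from rfl, hc]
    simpa using hcne

/-- Unitriangularity over `S^{01}`: the adjoined zero strictly below the diagonal, the
adjoined identity on the diagonal, and entries of `S⁰` (i.e. anything except the
adjoined identity) strictly above the diagonal. -/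
def IsU {S : Type*} {n : ℕ} (A : MatSR (Adj01 S) n) : Prop :=
  (∀ i j : Fin n, (j : ℕ) < (i : ℕ) → A i j = Adj01.zero) ∧
  (∀ i : Fin n, A i i = Adj01.one) ∧
  (∀ i j : Fin n, (i : ℕ) < (j : ℕ) → A i j ≠ Adj01.one)

lemma IsU.mul {S : Type*} [Add S] [Mul S] {n : ℕ} {A B : MatSR (Adj01 S) n}
    (hA : IsU A) (hB : IsU B) : IsU (matMul A B) := by
  refine ⟨?_, ?_, ?_⟩
  · intro i j hji
    apply finSum_adj01_eq_zero _ i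
    intro k
    rcases le_or_gt (i : ℕ) (k : ℕ) with h | h
    · rw [hB.1 k j (lt_of_lt_of_le hji h), Adj01.mul_zero]
    · rw [hA.1 i k h, Adj01.zero_mul]
  · intro i
    apply finSum_adj01_eq_one _ i
    · intro k
      rcases lt_trichotomy (k : ℕ) (i : ℕ) with h | h | h
      · rw [hA.1 i k h, Adj01.zero_mul]; exact Or.inl rfl
      · have : k = i := Fin.ext h
        subst this
        rw [hA.2.1 k, hB.2.1 k, Adj01.one_mul]; exact Or.inr rfl
      · rw [hB.1 k i h, Adj01.mul_zero]; exact Or.inl rfl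
    · rw [hA.2.1 i, hB.2.1 i, Adj01.one_mul]
  · intro i j hij
    apply finSum_adj01_ne_one _ i
    intro k
    rcases lt_trichotomy (k : ℕ) (i : ℕ) with h | h | h
    · rw [hA.1 i k h, Adj01.zero_mul]; exact fun h => by cases h
    · have : k = i := Fin.ext h
      subst this
      rw [hA.2.1 k, Adj01.one_mul]
      exact hB.2.2 k j (by omega)
    · rcases lt_trichotomy (k : ℕ) (j : ℕ) with h' | h' | h'
      · exact Adj01.mul_ne_one (hA.2.2 i k h) (hB.2.2 k j h')
      · have : k = j := Fin.ext h'
        subst this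
        rw [hB.2.1 k, Adj01.mul_one]
        exact hA.2.2 i k h
      · rw [hB.1 k j h', Adj01.mul_zero]; exact fun h => by cases h

/-- The multiplicative monoid `U_n(S)` of unitriangular matrices over `S^{01}`. -/
def UMat (S : Type u) (n : ℕ) : Type u := {A : MatSR (Adj01 S) n // IsU A}

instance {S : Type*} [Add S] [Mul S] {n : ℕ} : Mul (UMat S n) :=
  ⟨fun A B => ⟨matMul A.1 B.1, A.2.mul B.2⟩⟩

/-! ### Monogenic subsemirings. -/

/-- The carrier of the monogenic subsemiring `⟨a⟩` generated by `a` is the set of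
positive powers of `a`; in a bipotent semiring it is closed under addition. -/
instance genAdd {S : Type*} [BipotentSemiring S] (a : S) : Add ↥(Set.range (mpow a)) :=
  ⟨fun p q => ⟨p.1 + q.1, by
    rcases BipotentSemiring.bipotent p.1 q.1 with h | h <;> rw [h]
    exacts [p.2, q.2]⟩⟩

instance genMul {S : Type*} [BipotentSemiring S] (a : S) : Mul ↥(Set.range (mpow a)) :=
  ⟨fun p q => ⟨p.1 * q.1, by
    obtain ⟨m, hm⟩ := p.2
    obtain ⟨n, hn⟩ := q.2
    exact ⟨m + n + 1, by rw [← hm, ← hn, mpow_mul_mpow]⟩⟩⟩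

/-! ### Concrete bipotent semirings. -/

/-- The tropical semiring `ℕ_max` of positive natural numbers: addition is `max`,
multiplication is ordinary addition. -/
def NMax : Type := {n : ℕ // 0 < n}

instance : Add NMax := ⟨fun a b => ⟨max a.1 b.1, by have := a.2; have := b.2; omega⟩⟩
instance : Mul NMax := ⟨fun a b => ⟨a.1 + b.1, by have := a.2; have := b.2; omega⟩⟩

/-- The tropical semiring `(-ℕ)_max` of negative integers: addition is `max`,
multiplication is ordinary addition. -/
def NegNMax : Type := {z : ℤ // z < 0}

instance : Add NegNMax := ⟨fun a b => ⟨max a.1 b.1, by have := a.2; have := b.2; omega⟩⟩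
instance : Mul NegNMax := ⟨fun a b => ⟨a.1 + b.1, by have := a.2; have := b.2; omega⟩⟩

/-- The truncated tropical semiring `[k]_max` on `{1,…,k}`: addition is `max`,
multiplication is `a·b = min (a+b) k`. -/
def KMax (k : ℕ) : Type := {n : ℕ // 0 < n ∧ n ≤ k}

instance {k : ℕ} : Add (KMax k) :=
  ⟨fun a b => ⟨max a.1 b.1, by have := a.2; have := b.2; omega⟩⟩
instance {k : ℕ} : Mul (KMax k) :=
  ⟨fun a b => ⟨min (a.1 + b.1) k, by have := a.2; have := b.2; omega⟩⟩

/-- The truncated tropical semiring `[-k]_max` on `{-k,…,-1}`: addition is `max`,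
multiplication is `a·b = max (a+b) (-k)`. -/
def NegKMax (k : ℕ) : Type := {z : ℤ // -(k : ℤ) ≤ z ∧ z ≤ -1}

instance {k : ℕ} : Add (NegKMax k) :=
  ⟨fun a b => ⟨max a.1 b.1, by have := a.2; have := b.2; omega⟩⟩
instance {k : ℕ} : Mul (NegKMax k) :=
  ⟨fun a b => ⟨max (a.1 + b.1) (-(k : ℤ)), by have := a.2; have := b.2; omega⟩⟩

/-- The two-element boolean semifield `𝔹`: `{0,1}` with `0 < 1`, addition `max` (= "or")
and the usual multiplication (= "and"). -/
def BoolSR : Type := Bool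

instance : Add BoolSR := ⟨fun a b => (Bool.or a b : Bool)⟩
instance : Mul BoolSR := ⟨fun a b => (Bool.and a b : Bool)⟩

/-- A chain semiring: a linearly ordered set with addition `max` and multiplication `min`. -/
def ChainSR (L : Type u) [LinearOrder L] : Type u := L

instance {L : Type u} [LinearOrder L] : Add (ChainSR L) := ⟨fun a b => (max a b : L)⟩
instance {L : Type u} [LinearOrder L] : Mul (ChainSR L) := ⟨fun a b => (min a b : L)⟩

/-- The three-element commutative bipotent semiring of Proposition 1: order `A < B < C`
(addition is `max`), every element multiplicatively idempotent, and all products of two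
distinct elements equal to `B`. -/
inductive Three : Type
  | A : Three
  | B : Three
  | C : Three
deriving DecidableEq

instance : Fintype Three :=
  ⟨{Three.A, Three.B, Three.C}, fun x => by cases x <;> simp⟩

def Three.add' : Three → Three → Three
  | .A, y => y
  | x, .A => x
  | .B, y => y
  | x, .B => x
  | .C, .C => .C

def Three.mul' : Three → Three → Three
  | .A, .A => .A
  | .B, .B => .B
  | .C, .C => .C
  | _, _ => .B

instance : Add Three := ⟨Three.add'⟩
instance : Mul Three := ⟨Three.mul'⟩

instance : CommBipotentSemiring Three where
  nonempty' := ⟨Three.A⟩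
  add_assoc' := by decide
  add_comm' := by decide
  mul_assoc' := by decide
  left_distrib' := by decide
  right_distrib' := by decide
  bipotent := by decide
  mul_comm' := by decide

/-- A bundled (possibly zero-less and identity-less) semiring, used to quantify over
semirings inside hypotheses. -/
structure BundledSemiring : Type 1 where
  carrier : Type
  add : carrier → carrier → carrier
  mul : carrier → carrier → carrier
  nonempty' : Nonempty carrier
  add_assoc' : ∀ a b c, add (add a b) c = add a (add b c)
  add_comm' : ∀ a b, add a b = add b a
  mul_assoc' : ∀ a b c, mul (mul a b) c = mul a (mul b c)
  left_distrib' : ∀ a b c, mul a (add b c) = add (mul a b) (mul a c)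
  right_distrib' : ∀ a b c, mul (add a b) c = add (mul a c) (mul b c)

/-! ### Semifields. -/

/-- `z` is a zero element: additively neutral and multiplicatively absorbing. -/
def IsZeroElem {S : Type*} [Add S] [Mul S] (z : S) : Prop :=
  ∀ x : S, z + x = x ∧ x + z = x ∧ z * x = z ∧ x * z = z

/-- `S` is a semifield: a commutative semiring, possibly without zero, whose set of
non-zero elements forms a group under multiplication (with identity `e`). -/
def IsSemifield (S : Type*) [Add S] [Mul S] : Prop :=
  ∃ e : S, ¬ IsZeroElem e ∧
    (∀ x : S, ¬ IsZeroElem x → e * x = x ∧ x * e = x) ∧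
    (∀ x y : S, ¬ IsZeroElem x → ¬ IsZeroElem y → ¬ IsZeroElem (x * y)) ∧
    (∀ x : S, ¬ IsZeroElem x → ∃ y : S, ¬ IsZeroElem y ∧ x * y = e ∧ y * x = e)

/-! ### Truncated tropical semirings. -/

/-- The underlying set `[x,y] ∪ {0}` of the truncated tropical semiring `𝕋_{[x,y]}`
(without the zero element `-∞`), for `0 ≤ x`.  Addition is `max`; multiplication is
`y`-truncated addition `a ⊗ b = min (a+b) y`, with the element `0` acting as the
multiplicative identity. -/
def TTb (x y : ℝ) (_hx : 0 ≤ x) : Type := {r : ℝ // r = 0 ∨ (x ≤ r ∧ r ≤ y)}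

namespace TTb

protected def add {x y : ℝ} {hx : 0 ≤ x} (a b : TTb x y hx) : TTb x y hx :=
  ⟨max a.1 b.1, by rcases max_choice a.1 b.1 with h | h <;> rw [h]
                   exacts [a.2, b.2]⟩

protected noncomputable def mul {x y : ℝ} {hx : 0 ≤ x} (a b : TTb x y hx) : TTb x y hx :=
  if ha : a.1 = 0 then b else if hb : b.1 = 0 then a else
    ⟨min (a.1 + b.1) y, by
      rcases a.2 with h | h
      · exact absurd h ha
      rcases b.2 with h' | h'
      · exact absurd h' hb
      right
      exact ⟨le_min (by linarith [h.1, h'.1]) (by linarith [h.1, h.2]), min_le_right _ _⟩⟩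

instance {x y : ℝ} {hx : 0 ≤ x} : Add (TTb x y hx) := ⟨TTb.add⟩
noncomputable instance {x y : ℝ} {hx : 0 ≤ x} : Mul (TTb x y hx) := ⟨TTb.mul⟩

end TTb

/-- The truncated tropical semiring `𝕋_{[x,y]}` (for `0 ≤ x < y`): the real interval
`[x,y]` together with a multiplicative identity `0` and a zero `-∞`, with addition
`max` and multiplication the `y`-truncated addition `a ⊗ b = min (a+b) y`. -/
abbrev TT (x y : ℝ) (hx : 0 ≤ x) : Type := Adj0 (TTb x y hx)

/-- The multiplicative identity `0` of `𝕋_{[x,y]}`. -/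
noncomputable def ttId (x y : ℝ) (hx : 0 ≤ x) : TT x y hx := Adj0.elem ⟨0, Or.inl rfl⟩

lemma ttId_mul {x y : ℝ} {hx : 0 ≤ x} (b : TT x y hx) : ttId x y hx * b = b := by
  cases b with
  | zero => rfl
  | elem e =>
    show Adj0.elem (TTb.mul ⟨0, Or.inl rfl⟩ e) = Adj0.elem e
    delta TTb.mul
    exact congrArg Adj0.elem (dif_pos rfl)

/-- The subsemigroup `S` of `M_2(𝕋_{[1,z]})` of matrices of the form `[[0,a],[-∞,b]]`. -/
noncomputable def UpperS (z : ℝ) (hz : (0:ℝ) ≤ 1) : Type :=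
  {A : MatSR (TT 1 z hz) 2 // A 0 0 = ttId 1 z hz ∧ A 1 0 = Adj0.zero}

/-- The subsemigroup `S'` of `M_2(𝕋_{[1,z]})` of matrices of the form `[[0,-∞],[a,b]]`. -/
noncomputable def LowerS (z : ℝ) (hz : (0:ℝ) ≤ 1) : Type :=
  {A : MatSR (TT 1 z hz) 2 // A 0 0 = ttId 1 z hz ∧ A 0 1 = Adj0.zero}

noncomputable instance {z : ℝ} {hz : (0:ℝ) ≤ 1} : Mul (UpperS z hz) :=
  ⟨fun A B => ⟨A.1 * B.1, by
    obtain ⟨hA1, hA2⟩ := A.2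
    obtain ⟨hB1, hB2⟩ := B.2
    constructor
    · show A.1 0 0 * B.1 0 0 + A.1 0 1 * B.1 1 0 = ttId 1 z hz
      rw [hA1, hB1, hB2, ttId_mul, Adj0.mul_zero, Adj0.add_zero]
    · show A.1 1 0 * B.1 0 0 + A.1 1 1 * B.1 1 0 = Adj0.zero
      rw [hA2, hB2, Adj0.zero_mul, Adj0.mul_zero, Adj0.add_zero]⟩⟩

noncomputable instance {z : ℝ} {hz : (0:ℝ) ≤ 1} : Mul (LowerS z hz) :=
  ⟨fun A B => ⟨A.1 * B.1, by
    obtain ⟨hA1, hA2⟩ := A.2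
    obtain ⟨hB1, hB2⟩ := B.2
    constructor
    · show A.1 0 0 * B.1 0 0 + A.1 0 1 * B.1 1 0 = ttId 1 z hz
      rw [hA1, hB1, hA2, ttId_mul, Adj0.zero_mul, Adj0.add_zero]
    · show A.1 0 0 * B.1 0 1 + A.1 0 1 * B.1 1 1 = Adj0.zero
      rw [hA1, hB2, hA2, ttId_mul, Adj0.zero_mul, Adj0.add_zero]⟩⟩


/-! In max-plus arithmetic the `2 × 2` matrices `G j = [[1, -j], [-∞, 0]]` multiply so that the
`(0,1)` entry of `G (w 0) ⋯ G (w (k-1))` is `max_t (t - w t)`.  For a permutation `w` of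
`{0, …, k-1}` this maximum is `0` exactly when `w` is the identity, so no non-identity
permutation of the factors preserves the product.  Embedding these matrices in the top-left
corner of an `n × n` matrix, shifting all entries by a constant and filling the rest with
entries low enough never to contribute turns them into matrices over `ℕ_max` or `(-ℕ)_max`,
full or upper triangular. -/

open Finset

structure IsMaxPlusVal {T : Type*} [Add T] [Mul T] (v : T → WithBot ℤ) : Prop where
  map_add : ∀ a b, v (a + b) = max (v a) (v b)
  map_mul : ∀ a b, v (a * b) = v a + v b

def Adj0.lift {S : Type*} (v : S → WithBot ℤ) : Adj0 S → WithBot ℤ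
  | .zero => ⊥
  | .elem a => v a

lemma IsMaxPlusVal.adj0Lift {S : Type*} [Add S] [Mul S] {v : S → WithBot ℤ}
    (hv : IsMaxPlusVal v) : IsMaxPlusVal (Adj0.lift v) where
  map_add a b := by cases a <;> cases b <;> simp [Adj0.lift, hv.map_add]
  map_mul a b := by cases a <;> cases b <;> simp [Adj0.lift, hv.map_mul]

lemma finSum_succ {T : Type*} [Add T] {m : ℕ} (f : Fin (m + 1) → T) :
    finSum f = optStep (· + ·) (finSum fun i => f i.castSucc) (f (Fin.last m)) := by
  rw [finSum, List.ofFn_succ', List.concat_eq_append, List.foldl_concat]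
  rfl

lemma finProd_succ {T : Type*} [Mul T] {m : ℕ} (f : Fin (m + 1) → T) :
    finProd f = optStep (· * ·) (finProd fun i => f i.castSucc) (f (Fin.last m)) := by
  rw [finProd, List.ofFn_succ', List.concat_eq_append, List.foldl_concat]
  rfl

lemma finProd_map {M N : Type*} [Mul M] [Mul N] (f : M → N)
    (hf : ∀ a b, f (a * b) = f a * f b) {k : ℕ} (s : Fin k → M) :
    (finProd s).map f = finProd (f ∘ s) := by
  induction k with
  | zero => rfl
  | succ k ih =>
    rw [finProd_succ, finProd_succ, show (finProd fun i => (f ∘ s) i.castSucc) =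
      finProd (f ∘ fun i => s i.castSucc) from rfl, ← ih]
    cases finProd fun i => s i.castSucc <;> simp [optStep, hf]

section MaxPlus

variable {T : Type*} [Add T] [Mul T] {v : T → WithBot ℤ}

lemma IsMaxPlusVal.map_finSum (hv : IsMaxPlusVal v) {m : ℕ} (f : Fin (m + 1) → T) :
    (finSum f).map v = some (univ.sup (v ∘ f)) := by
  induction m with
  | zero => simp [finSum, optStep]
  | succ m ih =>
    obtain ⟨s, hs, hvs⟩ := Option.map_eq_some_iff.1 (ih fun i => f i.castSucc)
    rw [finSum_succ, hs, Fin.univ_castSuccEmb, sup_cons, sup_map]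
    simp [optStep, hv.map_add, hvs, max_comm, Function.comp_def]

lemma IsMaxPlusVal.map_matMul (hv : IsMaxPlusVal v) {n : ℕ} (A B : MatSR T n) (i j : Fin n) :
    v ((A * B) i j) = univ.sup fun l => v (A i l) + v (B l j) := by
  cases n with
  | zero => exact i.elim0
  | succ n =>
    obtain ⟨s, hs, hvs⟩ := Option.map_eq_some_iff.1 (hv.map_finSum fun l => A i l * B l j)
    have hAB : (A * B) i j = s := by
      show (finSum _).getD _ = s
      rw [hs]
      rfl
    simp [hAB, hvs, hv.map_mul, Function.comp_def]

end MaxPlus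

lemma add_le_coe_of_le {a b : WithBot ℤ} {x y z : ℤ} (ha : a ≤ x) (hb : b ≤ y)
    (h : x + y ≤ z) : a + b ≤ z :=
  (add_le_add ha hb).trans (by rw [← WithBot.coe_add]; exact WithBot.coe_le_coe.2 h)

/-- The top-left corner is the max-plus matrix `[[1, -j], [-∞, 0]]`; every other entry is
`-k`, which lies below every `-j` with `j < k` and is low enough to stand in for `-∞`. -/
def probeWeight {n : ℕ} (k j : ℕ) (r c : Fin (n + 2)) : ℤ :=
  if r = 0 ∧ c = 0 then 1 else if r = 0 ∧ c = 1 then -j else if r = 1 ∧ c = 1 then 0 else -k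

lemma probeWeight_zero_zero {n k j : ℕ} : probeWeight (n := n) k j 0 0 = 1 := by
  simp [probeWeight]

lemma probeWeight_zero_one {n k j : ℕ} : probeWeight (n := n) k j 0 1 = -j := by
  simp [probeWeight]

lemma probeWeight_one_one {n k j : ℕ} : probeWeight (n := n) k j 1 1 = 0 := by
  simp [probeWeight]

lemma probeWeight_one_zero {n k j : ℕ} : probeWeight (n := n) k j 1 0 = -k := by
  simp [probeWeight]

lemma probeWeight_of_row {n k j : ℕ} {r : Fin (n + 2)} (h0 : r ≠ 0) (h1 : r ≠ 1)
    (c : Fin (n + 2)) :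
    probeWeight k j r c = -k := by
  simp [probeWeight, h0, h1]

lemma probeWeight_of_col {n k j : ℕ} (r : Fin (n + 2)) {c : Fin (n + 2)} (h0 : c ≠ 0)
    (h1 : c ≠ 1) :
    probeWeight k j r c = -k := by
  simp [probeWeight, h0, h1]

lemma Fin.eq_zero_or_eq_one_or_ne {n : ℕ} (l : Fin (n + 2)) :
    l = 0 ∨ l = 1 ∨ l ≠ 0 ∧ l ≠ 1 := by
  tauto

lemma probeWeight_mem_Icc {n k j : ℕ} (hj : j ≤ k) (r c : Fin (n + 2)) :
    probeWeight k j r c ∈ Set.Icc (-k : ℤ) 1 := by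
  unfold probeWeight
  split_ifs <;> constructor <;> omega

lemma probeWeight_of_lt {n k j : ℕ} {r c : Fin (n + 2)} (h : c < r) :
    probeWeight k j r c = -k := by
  have : r ≠ 0 := by rintro rfl; exact Fin.not_lt_zero c h
  have : ¬ (r = 1 ∧ c = 1) := by rintro ⟨rfl, rfl⟩; exact lt_irrefl _ h
  simp_all [probeWeight]

section Probe

variable {T : Type*} {v : T → WithBot ℤ} {n k : ℕ} {H : ℤ}

/-- `A` realises `probeWeight k j` shifted by `H`; below the diagonal it may be lower still,
which lets upper triangular matrices put the adjoined zero there. -/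
def IsProbe (v : T → WithBot ℤ) (H : ℤ) (k j : ℕ) (A : MatSR T (n + 2)) : Prop :=
  (∀ r c, r ≤ c → v (A r c) = ↑(H + probeWeight k j r c)) ∧
    ∀ r c, c < r → v (A r c) ≤ ↑(H - k)

lemma IsProbe.val_le {j : ℕ} {A : MatSR T (n + 2)} (hA : IsProbe v H k j A) (r c : Fin (n + 2)) :
    v (A r c) ≤ ↑(H + probeWeight k j r c) := by
  rcases le_or_gt r c with h | h
  · exact (hA.1 r c h).le
  · rw [probeWeight_of_lt h, ← sub_eq_add_neg]
    exact hA.2 r c h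

/-- Row `0` of the product `G (w 0) ⋯ G (w m)` of probes: its `(0,1)` entry is
`(m + 1) H + max_t (t - w t)`. -/
structure RowInv (v : T → WithBot ℤ) (H : ℤ) {m : ℕ} (w : Fin (m + 1) → Fin k)
    (P : MatSR T (n + 2)) : Prop where
  val_00 : v (P 0 0) = ↑((m + 1) * (H + 1))
  le_val_01 : ∀ t : Fin (m + 1),
    (↑((m + 1) * H + (t : ℕ) - (w t : ℕ)) : WithBot ℤ) ≤ v (P 0 1)
  val_01_le : ∀ d : ℤ, (∀ t : Fin (m + 1), ((t : ℕ) : ℤ) - (w t : ℕ) ≤ d) →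
    v (P 0 1) ≤ ↑((m + 1) * H + d)
  val_le : ∀ c, c ≠ 0 → c ≠ 1 → v (P 0 c) ≤ ↑((m + 1) * H + m - k)

lemma rowInv_one {w : Fin 1 → Fin k} {A : MatSR T (n + 2)} (hA : IsProbe v H k (w 0) A) :
    RowInv v H w A where
  val_00 := by simpa [probeWeight] using hA.1 0 0 le_rfl
  le_val_01 t := by
    rw [Fin.fin_one_eq_zero t, hA.1 0 1 (by simp)]
    simp [probeWeight, sub_eq_add_neg]
  val_01_le d hd := by
    rw [hA.1 0 1 (by simp), probeWeight_zero_one]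
    have := hd 0
    exact WithBot.coe_le_coe.2 (by push_cast at this ⊢; omega)
  val_le c hc0 hc1 := (hA.val_le 0 c).trans (by simp [probeWeight, hc0, hc1, sub_eq_add_neg])

end Probe

section Product

variable {T : Type*} [Add T] [Mul T] {v : T → WithBot ℤ} {n k : ℕ} {H : ℤ}

lemma IsMaxPlusVal.le_val_mul (hv : IsMaxPlusVal v) {P A : MatSR T n} {i c : Fin n}
    {x y z : ℤ} (l : Fin n) (hP : x ≤ v (P i l)) (hA : y ≤ v (A l c)) (h : z ≤ x + y) :
    (z : WithBot ℤ) ≤ v ((P * A) i c) := by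
  rw [hv.map_matMul]
  refine le_trans ?_ (Finset.le_sup (f := fun l => v (P i l) + v (A l c)) (mem_univ l))
  exact (WithBot.coe_le_coe.2 h).trans (by rw [WithBot.coe_add]; exact add_le_add hP hA)

lemma RowInv.val_mul_le (hv : IsMaxPlusVal v) {m j : ℕ} {w : Fin (m + 1) → Fin k}
    {P A : MatSR T (n + 2)} (hP : RowInv v H w P) (hA : IsProbe v H k j A) {c : Fin (n + 2)}
    {d z : ℤ} (hd : ∀ t : Fin (m + 1), ((t : ℕ) : ℤ) - (w t : ℕ) ≤ d)
    (h0 : (m + 1) * (H + 1) + (H + probeWeight k j 0 c) ≤ z)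
    (h1 : (m + 1) * H + d + (H + probeWeight k j 1 c) ≤ z)
    (h2 : (m + 1) * H + m - k + (H - k) ≤ z) : v ((P * A) 0 c) ≤ z := by
  rw [hv.map_matMul]
  refine Finset.sup_le fun l _ => ?_
  rcases Fin.eq_zero_or_eq_one_or_ne l with rfl | rfl | ⟨hl0, hl1⟩
  · exact add_le_coe_of_le hP.val_00.le (hA.val_le 0 c) h0
  · exact add_le_coe_of_le (hP.val_01_le d hd) (hA.val_le 1 c) h1
  · refine add_le_coe_of_le (hP.val_le l hl0 hl1) (hA.val_le l c) ?_
    rwa [probeWeight_of_row hl0 hl1, ← sub_eq_add_neg]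

lemma RowInv.mul (hv : IsMaxPlusVal v) {m : ℕ} {w : Fin (m + 2) → Fin k}
    {P A : MatSR T (n + 2)} (hP : RowInv v H (fun i => w i.castSucc) P)
    (hA : IsProbe v H k (w (Fin.last _)) A) : RowInv v H w (P * A) := by
  have hj : (w (Fin.last _) : ℕ) < k := (w _).isLt
  have hdm (t : Fin (m + 1)) : ((t : ℕ) : ℤ) - (w t.castSucc : ℕ) ≤ m := by omega
  refine ⟨le_antisymm ?_ ?_, ?_, fun d hd => ?_, fun c hc0 hc1 => ?_⟩
  · refine hP.val_mul_le hv hA hdm ?_ ?_ (by push_cast; linarith)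
    · rw [probeWeight_zero_zero]; push_cast; linarith
    · rw [probeWeight_one_zero]; push_cast; linarith
  · refine hv.le_val_mul 0 hP.val_00.ge (hA.1 0 0 (by simp)).ge ?_
    rw [probeWeight_zero_zero]; push_cast; linarith
  · refine Fin.lastCases ?_ fun t => ?_
    · refine hv.le_val_mul 0 hP.val_00.ge (hA.1 0 1 (by simp)).ge ?_
      rw [probeWeight_zero_one]; push_cast; linarith
    · refine hv.le_val_mul 1 (hP.le_val_01 t) (hA.1 1 1 le_rfl).ge ?_
      rw [probeWeight_one_one, Fin.val_castSucc]; push_cast; linarith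
  · have hdj := hd (Fin.last _)
    push_cast at hdj
    refine hP.val_mul_le hv hA (fun t => hd t.castSucc) ?_ ?_ (by push_cast; linarith)
    · rw [probeWeight_zero_one]; push_cast; linarith
    · rw [probeWeight_one_one]; push_cast; linarith
  · refine hP.val_mul_le hv hA hdm ?_ ?_ (by push_cast; linarith)
    · rw [probeWeight_of_col _ hc0 hc1]; push_cast; linarith
    · rw [probeWeight_of_col _ hc0 hc1]; push_cast; linarith

lemma exists_finProd_rowInv (hv : IsMaxPlusVal v) {G : Fin k → MatSR T (n + 2)}
    (hG : ∀ j : Fin k, IsProbe v H k j (G j)) {m : ℕ} (w : Fin (m + 1) → Fin k) :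
    ∃ P, finProd (fun i => G (w i)) = some P ∧ RowInv v H w P := by
  induction m with
  | zero => exact ⟨G (w 0), rfl, rowInv_one (hG _)⟩
  | succ m ih =>
    obtain ⟨P, hP, hPinv⟩ := ih fun i => w i.castSucc
    refine ⟨P * G (w (Fin.last _)), ?_, hPinv.mul hv (hG _)⟩
    rw [finProd_succ, hP]
    rfl

lemma Equiv.Perm.eq_refl_of_forall_le {k : ℕ} (σ : Equiv.Perm (Fin k)) (h : ∀ t, t ≤ σ t) :
    σ = Equiv.refl _ := by
  have hsum : ∑ t : Fin k, (t : ℕ) = ∑ t, (σ t : ℕ) :=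
    (Equiv.sum_comp σ fun t => (t : ℕ)).symm
  have := (Finset.sum_eq_sum_iff_of_le fun t _ => Fin.le_iff_val_le_val.1 (h t)).1 hsum
  exact Equiv.ext fun t => (Fin.ext (this t (mem_univ t))).symm

theorem eq_refl_of_finProd_perm_eq (hv : IsMaxPlusVal v) {G : Fin k → MatSR T (n + 2)}
    (hG : ∀ j : Fin k, IsProbe v H k j (G j)) {σ : Equiv.Perm (Fin k)}
    (h : finProd (fun i => G (σ i)) = finProd G) : σ = Equiv.refl _ := by
  cases k with
  | zero => exact Subsingleton.elim _ _
  | succ k =>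
    obtain ⟨P, hPσ, hσ⟩ := exists_finProd_rowInv hv hG σ
    obtain ⟨Q, hQ, hid⟩ := exists_finProd_rowInv hv hG id
    obtain rfl : P = Q := Option.some.inj (hPσ.symm.trans (h.trans hQ))
    refine σ.eq_refl_of_forall_le fun t => ?_
    have := (hσ.le_val_01 t).trans (hid.val_01_le 0 fun t => by simp)
    rw [WithBot.coe_le_coe] at this
    exact Fin.le_iff_val_le_val.2 (by omega)

end Product

theorem not_stronglyPermutable_matSR_of_probes {T : Type*} [Add T] [Mul T]
    {v : T → WithBot ℤ} (hv : IsMaxPlusVal v) {n : ℕ}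
    (hprobe : ∀ k, ∃ H : ℤ, ∃ G : Fin k → MatSR T (n + 2),
      ∀ j : Fin k, IsProbe v H k j (G j)) :
    ¬ StronglyPermutable (MatSR T (n + 2)) := by
  rintro ⟨k, -, hk⟩
  obtain ⟨H, G, hG⟩ := hprobe k
  obtain ⟨σ, hσ, h⟩ := hk G
  exact hσ (eq_refl_of_finProd_perm_eq hv hG h)

theorem not_stronglyPermutable_utMat_of_probes {S : Type*} [Add S] [Mul S]
    {v : Adj0 S → WithBot ℤ} (hv : IsMaxPlusVal v) {n : ℕ}
    (hprobe : ∀ k, ∃ H : ℤ, ∃ G : Fin k → UTMat S (n + 2),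
      ∀ j : Fin k, IsProbe v H k j (G j).1) :
    ¬ StronglyPermutable (UTMat S (n + 2)) := by
  rintro ⟨k, -, hk⟩
  obtain ⟨H, G, hG⟩ := hprobe k
  obtain ⟨σ, hσ, h⟩ := hk G
  refine hσ (eq_refl_of_finProd_perm_eq hv hG ?_)
  have hval := finProd_map (M := UTMat S (n + 2)) (k := k) Subtype.val fun _ _ => rfl
  exact (hval _).symm.trans ((congrArg _ h).trans (hval G))

section Valuation

variable {S : Type*} {v : S → ℤ} {n : ℕ}

lemma exists_probe_entries (hrange : ∀ N : ℕ, ∃ H : ℤ, Set.Icc H (H + N) ⊆ Set.range v)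
    (k : ℕ) :
    ∃ H : ℤ, ∃ ψ : ℤ → S, ∀ (j : Fin k) (r c : Fin (n + 2)),
      v (ψ (H + probeWeight k j r c)) = H + probeWeight k j r c := by
  obtain ⟨H₀, hH₀⟩ := hrange (k + 1)
  have : Nonempty S := ⟨(hH₀ ⟨le_rfl, by omega⟩).choose⟩
  refine ⟨H₀ + k, Function.invFun v, fun j r c => Function.invFun_eq (hH₀ ?_)⟩
  have := probeWeight_mem_Icc j.isLt.le r c
  constructor <;> push_cast <;> linarith [this.1, this.2]

theorem not_stronglyPermutable_matSR [Add S] [Mul S]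
    (hv : IsMaxPlusVal fun a => (v a : WithBot ℤ))
    (hrange : ∀ N : ℕ, ∃ H : ℤ, Set.Icc H (H + N) ⊆ Set.range v) :
    ¬ StronglyPermutable (MatSR S (n + 2)) := by
  refine not_stronglyPermutable_matSR_of_probes hv fun k => ?_
  obtain ⟨H, ψ, hψ⟩ := exists_probe_entries (n := n) hrange k
  refine ⟨H, fun j r c => ψ (H + probeWeight k j r c),
    fun j => ⟨fun r c _ => ?_, fun r c h => ?_⟩⟩
  · dsimp only
    rw [hψ]
  · dsimp only
    rw [hψ, probeWeight_of_lt h, ← sub_eq_add_neg]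

theorem not_stronglyPermutable_utMat [Add S] [Mul S]
    (hv : IsMaxPlusVal fun a => (v a : WithBot ℤ))
    (hrange : ∀ N : ℕ, ∃ H : ℤ, Set.Icc H (H + N) ⊆ Set.range v) :
    ¬ StronglyPermutable (UTMat S (n + 2)) := by
  refine not_stronglyPermutable_utMat_of_probes hv.adj0Lift fun k => ?_
  obtain ⟨H, ψ, hψ⟩ := exists_probe_entries (n := n) hrange k
  let A (j : ℕ) : MatSR (Adj0 S) (n + 2) := fun r c =>
    if c < r then .zero else .elem (ψ (H + probeWeight k j r c))
  have hA (j : ℕ) : IsUT (A j) :=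
    ⟨fun r c h => if_pos h, fun r c h => ⟨_, if_neg (not_lt.2 h)⟩⟩
  refine ⟨H, fun j => ⟨A j, hA j⟩, fun j => ⟨fun r c h => ?_, fun r c h => ?_⟩⟩
  · simp [A, not_lt.2 h, Adj0.lift, hψ]
  · simp [A, h, Adj0.lift]

end Valuation

lemma NMax.isMaxPlusVal : IsMaxPlusVal fun a : NMax => ((a.1 : ℤ) : WithBot ℤ) where
  map_add a b := by
    rw [← WithBot.coe_max]
    exact congrArg _ (Nat.cast_max a.1 b.1)
  map_mul a b := by
    rw [← WithBot.coe_add]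
    exact congrArg _ (Nat.cast_add a.1 b.1)

lemma NMax.exists_Icc_subset_range (N : ℕ) :
    ∃ H : ℤ, Set.Icc H (H + N) ⊆ Set.range fun a : NMax => (a.1 : ℤ) :=
  ⟨1, fun x ⟨hx, _⟩ => ⟨⟨x.toNat, by omega⟩, by simp; omega⟩⟩

lemma NegNMax.isMaxPlusVal : IsMaxPlusVal fun a : NegNMax => (a.1 : WithBot ℤ) where
  map_add _ _ := WithBot.coe_max _ _
  map_mul _ _ := WithBot.coe_add _ _

lemma NegNMax.exists_Icc_subset_range (N : ℕ) :
    ∃ H : ℤ, Set.Icc H (H + N) ⊆ Set.range fun a : NegNMax => a.1 :=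
  ⟨-1 - N, fun x ⟨_, hx⟩ => ⟨⟨x, by linarith⟩, rfl⟩⟩

/-- for `n ≥ 2`, none of `M_n(ℕ_max)`, `M_n((-ℕ)_max)`, `UT_n(ℕ_max)`
and `UT_n((-ℕ)_max)` is strongly permutable. -/
theorem stmt_5 (n : ℕ) (hn : 2 ≤ n) :
    ¬ StronglyPermutable (MatSR NMax n) ∧ ¬ StronglyPermutable (MatSR NegNMax n) ∧
    ¬ StronglyPermutable (UTMat NMax n) ∧ ¬ StronglyPermutable (UTMat NegNMax n) := by
  obtain ⟨n, rfl⟩ := Nat.exists_eq_add_of_le' hn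
  exact ⟨not_stronglyPermutable_matSR NMax.isMaxPlusVal NMax.exists_Icc_subset_range,
    not_stronglyPermutable_matSR NegNMax.isMaxPlusVal NegNMax.exists_Icc_subset_range,
    not_stronglyPermutable_utMat NMax.isMaxPlusVal NMax.exists_Icc_subset_range,
    not_stronglyPermutable_utMat NegNMax.isMaxPlusVal NegNMax.exists_Icc_subset_range⟩
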